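/- The prism B = {x ∈ ℝ^n : x_1 ≥ x_2 ≥ ⋯ ≥ x_n ≥ x_1 - √(1+w), 0 ≤ Σ_i x_i ≤ √(1-w(n-1))} has volume (1+w)^{(n-1)/2}(1-w(n-1))^{1/2}/n!, equal to the volume of Q_n(w). -/

import Mathlib

/-!
Write `s = √(1 + w)` and `t = √(1 - w (n - 1))`, and let `K_n(c) = {y ∈ ℝⁿ | y ≥ 0, ∑ yᵢ ≤ c}`,
whose volume `cⁿ / n!` follows by Fubini over the last coordinate.

The consecutive differences of `x` telescope to `x₀ - x_{n-1}`, so the prism `B` is the preimage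
of `K_{n-1}(s) × [0, t]` under the linear map `x ↦ (x₀ - x₁, …, x_{n-2} - x_{n-1}, ∑ xᵢ)`, whose
determinant is `n`. Hence `vol B = s^{n-1} t / n!`.

`Q` is the image of `K_n(1)` under the linear map sending `eᵢ` to the `i`-th vertex
`∑_{k ≤ i} v_k`. Taking partial sums of rows does not change the determinant, and
`V = (vₖⱼ) = s I + b J` has determinant `s^{n-1} (s + n b) = s^{n-1} t`, so `vol Q = vol B`.
-/

open MeasureTheory

theorem Fin.sum_univ_castSucc_sub_succ {G : Type*} [AddCommGroup G] {m : ℕ}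
    (x : Fin (m + 1) → G) :
    ∑ k : Fin m, (x k.castSucc - x k.succ) = x 0 - x (Fin.last m) := by
  induction m with
  | zero => simp
  | succ m ih =>
    rw [Fin.sum_univ_castSucc]
    simp only [Fin.succ_castSucc, ih (fun i => x i.castSucc), Fin.castSucc_zero, Fin.succ_last]
    abel

theorem volume_eq_lintegral_snoc {n : ℕ} {A : Set (Fin (n + 1) → ℝ)} (hA : MeasurableSet A) :
    volume A = ∫⁻ a, volume {y : Fin n → ℝ | Fin.snoc y a ∈ A} := by
  let e := MeasurableEquiv.piFinSuccAbove (fun _ : Fin (n + 1) => ℝ) (Fin.last n)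
  have he : MeasurePreserving e.symm (volume.prod volume) volume :=
    (volume_preserving_piFinSuccAbove _ _).symm e
  rw [← he.measure_preimage_emb e.symm.measurableEmbedding,
    Measure.prod_apply (e.symm.measurable hA)]
  congr! with a
  ext y
  simp only [e, MeasurableEquiv.piFinSuccAbove_symm_apply, Fin.insertNthEquiv_last,
    Set.mem_preimage, Set.mem_ofPred_eq]
  exact Iff.rfl

theorem volume_last_mem_and_init_mem {n : ℕ} (I : Set ℝ) (C : Set (Fin n → ℝ)) :
    volume {y : Fin (n + 1) → ℝ | y (Fin.last n) ∈ I ∧ Fin.init y ∈ C} = volume I * volume C := by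
  let e := MeasurableEquiv.piFinSuccAbove (fun _ : Fin (n + 1) => ℝ) (Fin.last n)
  have hpre : {y : Fin (n + 1) → ℝ | y (Fin.last n) ∈ I ∧ Fin.init y ∈ C} = e ⁻¹' (I ×ˢ C) := by
    ext y; simp [e]
  rw [hpre, (volume_preserving_piFinSuccAbove _ _).measure_preimage_emb e.measurableEmbedding,
    Measure.volume_eq_prod, Measure.prod_prod]

def cornerSimplex (n : ℕ) (c : ℝ) : Set (Fin n → ℝ) :=
  {y | (∀ i, 0 ≤ y i) ∧ ∑ i, y i ≤ c}

theorem isClosed_cornerSimplex (n : ℕ) (c : ℝ) : IsClosed (cornerSimplex n c) := by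
  simp only [cornerSimplex, Set.ofPred_and, Set.ofPred_forall]
  exact (isClosed_iInter fun i => isClosed_le continuous_const (continuous_apply i)).inter
    (isClosed_le (by fun_prop) continuous_const)

theorem convex_cornerSimplex (n : ℕ) (c : ℝ) : Convex ℝ (cornerSimplex n c) := by
  have hsum : IsLinearMap ℝ fun y : Fin n → ℝ => ∑ i, y i :=
    ⟨fun x y => Finset.sum_add_distrib, fun r x => (Finset.mul_sum _ _ _).symm⟩
  simp only [cornerSimplex, Set.ofPred_and, Set.ofPred_forall]
  exact (convex_iInter fun i => convex_halfSpace_ge (LinearMap.proj i).isLinear 0).inter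
    (convex_halfSpace_le hsum c)

theorem snoc_mem_cornerSimplex_iff {n : ℕ} {c a : ℝ} {y : Fin n → ℝ} :
    Fin.snoc y a ∈ cornerSimplex (n + 1) c ↔ 0 ≤ a ∧ y ∈ cornerSimplex n (c - a) := by
  simp only [cornerSimplex, Set.mem_ofPred_eq, Fin.forall_fin_succ', Fin.snoc_castSucc,
    Fin.snoc_last, Fin.sum_univ_castSucc, le_sub_iff_add_le]
  tauto

theorem integral_sub_pow_div_factorial (n : ℕ) (c : ℝ) :
    ∫ a in 0..c, (c - a) ^ n / n.factorial = c ^ (n + 1) / (n + 1).factorial := by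
  rw [intervalIntegral.integral_div, intervalIntegral.integral_comp_sub_left (· ^ n),
    integral_pow, Nat.factorial_succ]
  push_cast
  field_simp
  ring

theorem volume_cornerSimplex (n : ℕ) {c : ℝ} (hc : 0 ≤ c) :
    volume (cornerSimplex n c) = ENNReal.ofReal (c ^ n / n.factorial) := by
  induction n generalizing c with
  | zero => simp [cornerSimplex, hc, volume_pi]
  | succ n ih =>
    have hslice (a : ℝ) : volume {y | Fin.snoc y a ∈ cornerSimplex (n + 1) c} =
        (Set.Icc 0 c).indicator (fun a => ENNReal.ofReal ((c - a) ^ n / n.factorial)) a := by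
      by_cases ha : a ∈ Set.Icc 0 c
      · have hset : {y | Fin.snoc y a ∈ cornerSimplex (n + 1) c} = cornerSimplex n (c - a) := by
          ext y
          simp [snoc_mem_cornerSimplex_iff, ha.1]
        rw [hset, ih (sub_nonneg.2 ha.2), Set.indicator_of_mem ha]
      · have hset : {y | Fin.snoc y a ∈ cornerSimplex (n + 1) c} = ∅ := by
          refine Set.eq_empty_of_forall_notMem fun y hy => ha ?_
          obtain ⟨ha0, hy0, hyc⟩ := snoc_mem_cornerSimplex_iff.1 hy
          exact ⟨ha0, by linarith [Fintype.sum_nonneg (show 0 ≤ y from hy0)]⟩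
        rw [hset, Set.indicator_of_notMem ha, measure_empty]
    rw [volume_eq_lintegral_snoc (isClosed_cornerSimplex _ _).measurableSet]
    simp only [hslice]
    rw [lintegral_indicator measurableSet_Icc, ← ofReal_integral_eq_lintegral_ofReal,
      integral_Icc_eq_integral_Ioc, ← intervalIntegral.integral_of_le hc,
      integral_sub_pow_div_factorial]
    · exact (by fun_prop : Continuous fun a : ℝ => (c - a) ^ n / n.factorial).integrableOn_Icc
    · filter_upwards [ae_restrict_mem measurableSet_Icc] with a ha
      have : 0 ≤ c - a := by linarith [ha.2]
      positivity

theorem convexHull_insert_zero_range_single (n : ℕ) :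
    convexHull ℝ (insert 0 (Set.range fun i : Fin n => (Pi.single i 1 : Fin n → ℝ))) =
      cornerSimplex n 1 := by
  refine subset_antisymm (convexHull_min ?_ (convex_cornerSimplex n 1)) fun y hy => ?_
  · rintro _ (rfl | ⟨i, rfl⟩)
    · simp [cornerSimplex]
    · refine ⟨fun j => ?_, by simp⟩
      simp only [Pi.single_apply]; split_ifs <;> norm_num
  · let weight : Option (Fin n) → ℝ := fun o => o.elim (1 - ∑ i, y i) y
    let vertex : Option (Fin n) → Fin n → ℝ := fun o => o.elim 0 (Pi.single · 1)
    have hweight : ∑ o, weight o = 1 := by simp [weight, Fintype.sum_option]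
    have hcenter : Finset.univ.centerMass weight vertex = y := by
      simpa [Finset.centerMass, hweight, Fintype.sum_option, weight, vertex] using
        (pi_eq_sum_univ' y).symm
    rw [← hcenter]
    refine Finset.centerMass_mem_convexHull _ (fun o _ => ?_) (by simp [hweight])
      (fun o _ => ?_)
    · cases o with
      | none => simpa [weight] using hy.2
      | some i => exact hy.1 i
    · cases o with
      | none => exact Set.mem_insert _ _
      | some i => exact Set.mem_insert_of_mem _ ⟨i, rfl⟩

theorem volume_convexHull_insert_zero_range (n : ℕ) (p : Fin n → Fin n → ℝ) :
    volume (convexHull ℝ (insert 0 (Set.range p))) =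
      ENNReal.ofReal (|(Matrix.of p).det| / n.factorial) := by
  let f := Matrix.toLin' (Matrix.of p).transpose
  have hvertices : insert 0 (Set.range p) =
      f '' insert 0 (Set.range fun i : Fin n => (Pi.single i 1 : Fin n → ℝ)) := by
    rw [Set.image_insert_eq, map_zero, ← Set.range_comp]
    congr 2
    ext i j
    simp [f]
  rw [hvertices, ← LinearMap.image_convexHull, convexHull_insert_zero_range_single,
    Measure.addHaar_image_linearMap, LinearMap.det_toLin', Matrix.det_transpose,
    volume_cornerSimplex n zero_le_one, ← ENNReal.ofReal_mul (abs_nonneg _)]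
  simp [div_eq_mul_inv]

theorem Matrix.det_of_sum_Iic {R : Type*} [CommRing R] {n : ℕ} (v : Fin n → Fin n → R) :
    (Matrix.of fun i j => ∑ k ∈ Finset.Iic i, v k j).det = (Matrix.of v).det := by
  let L : Matrix (Fin n) (Fin n) R := Matrix.of fun i k => if k ≤ i then 1 else 0
  have hL : L.det = 1 := by
    rw [Matrix.det_of_isLowerTriangular]
    · simp [L]
    · intro i k hik
      exact if_neg (not_le.2 hik)
  have hmul : (Matrix.of fun i j => ∑ k ∈ Finset.Iic i, v k j) = L * Matrix.of v := by
    ext i j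
    simp [L, Matrix.mul_apply, Finset.sum_ite, Finset.filter_ge_eq_Iic]
  rw [hmul, Matrix.det_mul, hL, one_mul]

theorem Matrix.det_of_ite_eq_add {K : Type*} [Field K] (m : ℕ) (c b : K) :
    (Matrix.of fun i j : Fin (m + 1) => if i = j then c + b else b).det =
      c ^ m * (c + (m + 1) * b) := by
  rcases eq_or_ne c 0 with rfl | hc
  · rcases m with _ | m
    · simp [Matrix.det_unique]
    · rw [Matrix.det_zero_of_row_eq (i := 0) (j := 1) (by simp) (by ext; simp)]
      simp
  · let u : Matrix (Fin (m + 1)) Unit K := Matrix.replicateCol Unit fun _ => b / c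
    let w : Matrix Unit (Fin (m + 1)) K := Matrix.replicateRow Unit fun _ => 1
    have hrank_one : (Matrix.of fun i j : Fin (m + 1) => if i = j then c + b else b) =
        c • (1 + u * w) := by
      ext i j
      by_cases hij : i = j <;> simp [hij, u, w, Matrix.mul_apply, field]
    rw [hrank_one, Matrix.det_smul, Matrix.det_one_add_replicateCol_mul_replicateRow]
    simp only [dotProduct, Fintype.card_fin, pow_succ, one_mul, Finset.sum_const,
      Finset.card_univ, nsmul_eq_mul, Nat.cast_add, Nat.cast_one]
    field_simp

section
variable (R : Type*) [CommRing R]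

def diffsSnocSum (m : ℕ) : (Fin (m + 1) → R) →ₗ[R] Fin (m + 1) → R where
  toFun x := Fin.snoc (fun k => x k.castSucc - x k.succ) (∑ i, x i)
  map_add' x y := by
    ext i
    refine Fin.lastCases ?_ (fun k => ?_) i
    · simp [Finset.sum_add_distrib]
    · simp only [Fin.snoc_castSucc, Pi.add_apply]; ring
  map_smul' r x := by
    ext i
    refine Fin.lastCases ?_ (fun k => ?_) i
    · simp [Finset.mul_sum]
    · simp only [Fin.snoc_castSucc, Pi.smul_apply, smul_eq_mul, RingHom.id_apply]; ring

variable {R}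

@[simp] theorem diffsSnocSum_apply_last (m : ℕ) (x : Fin (m + 1) → R) :
    diffsSnocSum R m x (Fin.last m) = ∑ i, x i := by
  simp [diffsSnocSum]

@[simp] theorem diffsSnocSum_apply_castSucc (m : ℕ) (x : Fin (m + 1) → R) (k : Fin m) :
    diffsSnocSum R m x k.castSucc = x k.castSucc - x k.succ := by
  simp [diffsSnocSum]

theorem det_diffsSnocSum (m : ℕ) : LinearMap.det (diffsSnocSum R m) = m + 1 := by
  let U : Matrix (Fin (m + 1)) (Fin (m + 1)) R := Matrix.of fun k j => if k ≤ j then 1 else 0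
  have hU : U.det = 1 := by
    rw [Matrix.det_of_isUpperTriangular]
    · simp [U]
    · intro j k hjk
      exact if_neg (not_le.2 hjk)
  have hentry (i j : Fin (m + 1)) :
      LinearMap.toMatrix' (diffsSnocSum R m ∘ₗ Matrix.toLin' U) i j =
        if i = Fin.last m then (j + 1 : R) else if i = j then 1 else 0 := by
    simp only [LinearMap.toMatrix'_apply, LinearMap.comp_apply, Matrix.toLin'_apply,
      Matrix.mulVec_single_one]
    induction i using Fin.lastCases with
    | last => simp [U, Finset.filter_ge_eq_Iic]
    | cast k =>
      simp only [U, Matrix.col_apply, Matrix.of_apply, diffsSnocSum_apply_castSucc,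
        Fin.le_def, Fin.ext_iff, Fin.val_castSucc, Fin.val_succ, Fin.val_last]
      split_ifs <;> first | (exfalso; omega) | norm_num
  have hT : (LinearMap.toMatrix' (diffsSnocSum R m ∘ₗ Matrix.toLin' U)).det = m + 1 := by
    rw [Matrix.det_of_isLowerTriangular]
    · simp [hentry]
    · intro i j hij
      have hij : i < j := hij
      simp [hentry, hij.ne, (hij.trans_le (Fin.le_last j)).ne]
  rwa [LinearMap.det_toMatrix', LinearMap.det_comp, LinearMap.det_toLin', hU, mul_one] at hT

end

theorem volume_antitone_slab (m : ℕ) {s t : ℝ} (hs : 0 ≤ s) (ht : 0 ≤ t) :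
    volume {x : Fin (m + 1) → ℝ | Antitone x ∧ x 0 - s ≤ x (Fin.last m) ∧
      0 ≤ ∑ i, x i ∧ ∑ i, x i ≤ t} = ENNReal.ofReal (s ^ m * t / (m + 1).factorial) := by
  have hpre : {x : Fin (m + 1) → ℝ | Antitone x ∧ x 0 - s ≤ x (Fin.last m) ∧
      0 ≤ ∑ i, x i ∧ ∑ i, x i ≤ t} = diffsSnocSum ℝ m ⁻¹'
        {y | y (Fin.last m) ∈ Set.Icc 0 t ∧ Fin.init y ∈ cornerSimplex m s} := by
    ext x
    simp only [Set.mem_ofPred_eq, Set.mem_preimage, Set.mem_Icc, cornerSimplex, Fin.init,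
      diffsSnocSum_apply_last, diffsSnocSum_apply_castSucc, Fin.sum_univ_castSucc_sub_succ,
      Fin.antitone_iff_succ_le, sub_nonneg, sub_le_comm (b := s)]
    tauto
  have hdet : LinearMap.det (diffsSnocSum ℝ m) = m + 1 := det_diffsSnocSum m
  rw [hpre, Measure.addHaar_preimage_linearMap _ (by rw [hdet]; positivity), hdet,
    volume_last_mem_and_init_mem, Real.volume_Icc, volume_cornerSimplex m hs,
    sub_zero, ← ENNReal.ofReal_mul ht, ← ENNReal.ofReal_mul (abs_nonneg _)]
  congr 1
  rw [abs_of_pos (by positivity), Nat.factorial_succ]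
  push_cast
  field_simp

theorem volume_preimage_toLp {ι : Type*} [Fintype ι] (A : Set (EuclideanSpace ℝ ι)) :
    volume (WithLp.toLp 2 ⁻¹' A) = volume A :=
  (PiLp.volume_preserving_toLp ι).measure_preimage_emb
    (MeasurableEquiv.toLp 2 (ι → ℝ)).measurableEmbedding A

theorem volume_convexHull_image_toLp {ι : Type*} [Fintype ι] (S : Set (ι → ℝ)) :
    volume (convexHull ℝ (WithLp.toLp 2 '' S : Set (EuclideanSpace ℝ ι))) =
      volume (convexHull ℝ S) := by
  have himage : WithLp.toLp 2 '' convexHull ℝ S =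
      (convexHull ℝ (WithLp.toLp 2 '' S) : Set (EuclideanSpace ℝ ι)) :=
    LinearMap.image_convexHull (WithLp.linearEquiv 2 ℝ (ι → ℝ)).symm.toLinearMap S
  rw [← himage, ← volume_preimage_toLp, Set.preimage_image_eq _ (WithLp.toLp_injective 2)]

theorem schobi_prism_volume
    (n : ℕ) (hn : 2 ≤ n) (w : ℝ) (hw1 : -1 < w)
    (b a : ℝ)
    (hb : b = (Real.sqrt (1 - w * ((n : ℝ) - 1)) - Real.sqrt (1 + w)) / n)
    (ha : a = b + Real.sqrt (1 + w))
    (v : Fin n → Fin n → ℝ)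
    (hv : ∀ i j, v i j = if i = j then a else b)
    (Q : Set (EuclideanSpace ℝ (Fin n)))
    (hQ : Q = convexHull ℝ (insert (0 : EuclideanSpace ℝ (Fin n))
      (Set.range (fun i : Fin n =>
        (WithLp.toLp 2 (fun j => ∑ k ∈ Finset.Iic i, v k j) : EuclideanSpace ℝ (Fin n))))))
    (Bslab : Set (EuclideanSpace ℝ (Fin n)))
    (hB : Bslab = {x : EuclideanSpace ℝ (Fin n) |
      (∀ i j : Fin n, i ≤ j → x j ≤ x i) ∧
      x ⟨0, by omega⟩ - Real.sqrt (1 + w) ≤ x ⟨n - 1, by omega⟩ ∧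
      0 ≤ ∑ i, x i ∧ (∑ i, x i) ≤ Real.sqrt (1 - w * ((n : ℝ) - 1))}) :
    MeasureTheory.volume Bslab =
      ENNReal.ofReal
        ((1 + w) ^ (((n : ℝ) - 1) / 2) * Real.sqrt (1 - w * ((n : ℝ) - 1)) /
          (n.factorial : ℝ)) ∧
    MeasureTheory.volume Bslab = MeasureTheory.volume Q := by
  obtain ⟨m, rfl⟩ : ∃ m, n = m + 1 := ⟨n - 1, by omega⟩
  set s := Real.sqrt (1 + w)
  set t := Real.sqrt (1 - w * (((m + 1 : ℕ) : ℝ) - 1))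
  have hs : 0 < s := Real.sqrt_pos.2 (by linarith)
  have hBvol : volume Bslab = ENNReal.ofReal (s ^ m * t / (m + 1).factorial) := by
    rw [← volume_preimage_toLp, hB]
    exact volume_antitone_slab m hs.le (Real.sqrt_nonneg _)
  have hdet : (Matrix.of v).det = s ^ m * t := by
    have hV : Matrix.of v = Matrix.of fun i j => if i = j then s + b else b := by
      ext i j
      simp [hv, ha, add_comm]
    rw [hV, Matrix.det_of_ite_eq_add, hb]
    push_cast
    field_simp
    ring
  have hQvol : volume Q = ENNReal.ofReal (s ^ m * t / (m + 1).factorial) := by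
    have hvertices :
        insert 0 (Set.range fun i => WithLp.toLp 2 fun j => ∑ k ∈ Finset.Iic i, v k j) =
          WithLp.toLp 2 '' insert 0 (Set.range fun i j => ∑ k ∈ Finset.Iic i, v k j) := by
      rw [Set.image_insert_eq, ← Set.range_comp]
      rfl
    rw [hQ, hvertices, volume_convexHull_image_toLp, volume_convexHull_insert_zero_range,
      Matrix.det_of_sum_Iic, hdet, abs_of_nonneg (by positivity)]
  have hpow : (1 + w) ^ ((((m + 1 : ℕ) : ℝ) - 1) / 2) = s ^ m := by
    calc (1 + w) ^ ((((m + 1 : ℕ) : ℝ) - 1) / 2) = ((1 + w) ^ (1 / 2 : ℝ)) ^ (m : ℝ) := by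
          rw [← Real.rpow_mul (by linarith)]
          push_cast
          ring_nf
      _ = s ^ m := by rw [← Real.sqrt_eq_rpow, Real.rpow_natCast]
  exact ⟨by rw [hBvol, hpow], by rw [hBvol, hQvol]⟩
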